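/- Let u ⊆ {1,…,s} be nonempty, k ∈ {0,1,…,m−1}^{|u|}, and let w ⊆ u be nonempty. If rank(C_{u,k+1_w}) − rank(C_{u,k}) < |w| over F₂, then there exists a nonempty v ⊆ w such that ∏_{j∈v} N_{0,i,j} = 1 for every i ∈ {0,…,2^m−1} with C_{u,k}·i⃗ = 0. -/

import Mathlib

/-!
Over `F₂` every linear combination is a subset sum. If no nonempty subset sum of the new rows
`c_j` (the `(k_j+1)`-st row of `C_j`, `j ∈ w`) lay in the row space of `C_{u,k}`, they would be
independent modulo that row space and the rank would grow by exactly `|w|`. So some nonempty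
`v ⊆ w` has `∑_{j ∈ v} c_j` in the row space. If `C_{u,k} i⃗ = 0`, the first `k_j` binary digits of
`x_{ij}` vanish, hence `N_{0,i,j} = (-1)^(c_j ⬝ i⃗)`, and the product over `v` is
`(-1)^((∑_{j ∈ v} c_j) ⬝ i⃗) = 1` because `i⃗` is orthogonal to the row space.
-/

open Finset

noncomputable section

/-- The bit vector `i⃗ ∈ F₂^m` of the integer `i = Σ_{ℓ=1}^m i_ℓ 2^{ℓ-1}`. -/
def bvec (m : ℕ) (i : ℕ) : Fin m → ZMod 2 :=
  fun ℓ => if Nat.testBit i ℓ.1 then 1 else 0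

/-- The `(r+1)`-st row (i.e. `r` with 0-indexing) of an `m × m` matrix over `F₂`,
as a vector in `F₂^m`; junk value `0` if `r ≥ m` (never used under the hypotheses below). -/
def rowAt (m : ℕ) (A : Matrix (Fin m) (Fin m) (ZMod 2)) (r : ℕ) : Fin m → ZMod 2 :=
  fun ℓ => if h : r < m then A ⟨r, h⟩ ℓ else 0

/-- The stacked matrix `C_{u,k}`: for each `j ∈ u`, the first `k j` rows of `C j`. -/
def stack {m s : ℕ} (C : Fin s → Matrix (Fin m) (Fin m) (ZMod 2))
    (u : Finset (Fin s)) (k : Fin s → ℕ) :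
    Matrix ((j : {x // x ∈ u}) × Fin (k j.1)) (Fin m) (ZMod 2) :=
  fun p => rowAt m (C p.1.1) p.2.1

/-- `∇C_{u,k}`: the matrix whose rows are the `(k j + 1)`-st rows (1-indexed) of `C j`, `j ∈ u`. -/
def grad {m s : ℕ} (C : Fin s → Matrix (Fin m) (Fin m) (ZMod 2))
    (u : Finset (Fin s)) (k : Fin s → ℕ) :
    Matrix {x // x ∈ u} (Fin m) (ZMod 2) :=
  fun j => rowAt m (C j.1) (k j.1)

/-- The coordinate `x_{ij} ∈ [0,1)` of the digital net generated by `C₁,…,C_s`: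
`x_{ij} = Σ_{ℓ=1}^m y_ℓ 2^{-ℓ}` where `y = C_j · i⃗` over `F₂`. -/
def pt {m s : ℕ} (C : Fin s → Matrix (Fin m) (Fin m) (ZMod 2)) (i : ℕ) (j : Fin s) : ℝ :=
  ∑ ℓ : Fin m, (((C j).mulVec (bvec m i) ℓ).val : ℝ) / 2 ^ (ℓ.1 + 1)

/-- The factor `N`: with `M(x,x') = max{k ∈ ℕ₀ : ⌊2^k x⌋ = ⌊2^k x'⌋}` (the number of matching
leading binary digits), `Nf x x' c` equals `1` if `M(x,x') > c` (equivalently the first `c+1`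
binary digits match), `-1` if `M(x,x') = c` (the first `c` digits match but not `c+1`), and
`0` if `M(x,x') < c`. -/
def Nf (x x' : ℝ) (c : ℕ) : ℤ :=
  if ⌊(2:ℝ) ^ (c + 1) * x⌋ = ⌊(2:ℝ) ^ (c + 1) * x'⌋ then 1
  else if ⌊(2:ℝ) ^ c * x⌋ = ⌊(2:ℝ) ^ c * x'⌋ then -1
  else 0

/-- The gain coefficient `Γ_{u,k} = 2^{-m} Σ_{i=0}^{2^m-1} Σ_{i'=0}^{2^m-1} ∏_{j∈u} N_{i,i',j}`. -/
def Gam {m s : ℕ} (C : Fin s → Matrix (Fin m) (Fin m) (ZMod 2))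
    (u : Finset (Fin s)) (k : Fin s → ℕ) : ℚ :=
  (2 ^ m : ℚ)⁻¹ * ∑ i ∈ Finset.range (2 ^ m), ∑ i' ∈ Finset.range (2 ^ m),
      ∏ j ∈ u, (Nf (pt C i j) (pt C i' j) (k j) : ℚ)

open Matrix Module Submodule

section SubsetSums

variable {ι E : Type*} [AddCommGroup E] [Module (ZMod 2) E]

theorem sum_zmod_two_smul_eq_sum_filter [Fintype ι] (c : ι → ZMod 2) (g : ι → E) :
    ∑ i, c i • g i = ∑ i with c i ≠ 0, g i := by
  rw [Finset.sum_filter]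
  refine Finset.sum_congr rfl fun i _ => ?_
  rcases (by decide : ∀ a : ZMod 2, a = 0 ∨ a = 1) (c i) with h | h <;> simp [h]

/-- Over `F₂` a linear combination is a subset sum, so the hypothesis says that the `g j`,
`j ∈ w`, are linearly independent modulo `V`. -/
theorem finrank_sup_span_image_eq_add_card [FiniteDimensional (ZMod 2) E]
    (V : Submodule (ZMod 2) E) (g : ι → E) (w : Finset ι)
    (h : ∀ v ⊆ w, v.Nonempty → ∑ j ∈ v, g j ∉ V) :
    finrank (ZMod 2) ↥(V ⊔ span (ZMod 2) (g '' w)) = finrank (ZMod 2) V + w.card := by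
  classical
  have hcomb : ∀ c : w → ZMod 2, ∑ i, c i • g i ∈ V → c = 0 := by
    intro c hc
    by_contra! hc0
    obtain ⟨i, hi⟩ := Function.ne_iff.mp hc0
    refine h ((univ.filter (c · ≠ 0)).map (Function.Embedding.subtype _)) ?_ ⟨i, ?_⟩ ?_
    · intro j hj
      obtain ⟨i, -, rfl⟩ := Finset.mem_map.mp hj
      exact i.2
    · exact Finset.mem_map_of_mem _ (by simpa using hi)
    · rwa [Finset.sum_map, ← sum_zmod_two_smul_eq_sum_filter]
  have hli : LinearIndependent (ZMod 2) (fun i : w => g i) :=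
    Fintype.linearIndependent_iff.mpr fun c hc => congrFun (hcomb c (hc ▸ V.zero_mem))
  have hdisj : V ⊓ span (ZMod 2) (g '' w) = ⊥ := by
    refine (Submodule.eq_bot_iff _).mpr fun x hx => ?_
    obtain ⟨hxV, hxg⟩ := Submodule.mem_inf.mp hx
    obtain ⟨c, rfl⟩ := (Submodule.mem_span_image_finset_iff_exists_fun (ZMod 2)).mp hxg
    simp [hcomb c hxV]
  have hsum := Submodule.finrank_sup_add_finrank_inf_eq V (span (ZMod 2) (g '' w))
  have hspan : finrank (ZMod 2) (span (ZMod 2) (g '' w)) = w.card := by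
    rw [Set.image_eq_range]
    exact (finrank_span_eq_card hli).trans (Fintype.card_coe w)
  rwa [hdisj, finrank_bot, add_zero, hspan] at hsum

end SubsetSums

theorem dotProduct_eq_zero_of_mem_span_row {n ι R : Type*} [Fintype n] [CommRing R]
    {A : Matrix ι n R} {b : n → R} (hA : A *ᵥ b = 0) {x : n → R}
    (hx : x ∈ span R (Set.range A)) : x ⬝ᵥ b = 0 := by
  induction hx using Submodule.span_induction with
  | mem x hx =>
    obtain ⟨i, rfl⟩ := hx
    exact congrFun hA i
  | zero => exact zero_dotProduct b
  | add x y _ _ hx hy => rw [add_dotProduct, hx, hy, add_zero]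
  | smul a x _ hx => rw [smul_dotProduct, hx, smul_zero]

theorem prod_neg_one_pow_val_eq_one {ι : Type*} (v : Finset ι) (a : ι → ZMod 2)
    (ha : ∑ j ∈ v, a j = 0) : ∏ j ∈ v, (-1 : ℤ) ^ (a j).val = 1 := by
  rw [Finset.prod_pow_eq_pow_sum]
  refine Even.neg_one_pow (ZMod.natCast_eq_zero_iff_even.mp ?_)
  simpa using ha

/-- `pt C i j` is `binaryFrac (C j *ᵥ bvec m i)` by definition. -/
def binaryFrac {m : ℕ} (y : Fin m → ZMod 2) : ℝ :=
  ∑ ℓ : Fin m, ((y ℓ).val : ℝ) / 2 ^ (ℓ.1 + 1)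

theorem sum_Ico_inv_two_pow_succ_lt (c m : ℕ) :
    ∑ ℓ ∈ Ico c m, (2⁻¹ : ℝ) ^ (ℓ + 1) < 2⁻¹ ^ c := by
  rcases le_or_gt c m with hcm | hmc
  · have hsum : ∀ n, c ≤ n → ∑ ℓ ∈ Ico c n, (2⁻¹ : ℝ) ^ (ℓ + 1) = 2⁻¹ ^ c - 2⁻¹ ^ n := by
      intro n hn
      induction n, hn using Nat.le_induction with
      | base => simp
      | succ n hcn ih => rw [Finset.sum_Ico_succ_top hcn, ih]; ring
    rw [hsum m hcm]
    linarith [pow_pos (inv_pos.mpr (two_pos : (0 : ℝ) < 2)) m]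
  · rw [Finset.Ico_eq_empty (by omega), Finset.sum_empty]
    positivity

section BinaryFrac

variable {m : ℕ} (y : Fin m → ZMod 2)

theorem floor_two_pow_mul_binaryFrac_eq_zero {c : ℕ} (h : ∀ ℓ : Fin m, ℓ.1 < c → y ℓ = 0) :
    ⌊(2 : ℝ) ^ c * binaryFrac y⌋ = 0 := by
  have hterm : ∀ ℓ : Fin m, ((y ℓ).val : ℝ) / 2 ^ (ℓ.1 + 1)
      ≤ if c ≤ ℓ.1 then (2⁻¹ : ℝ) ^ (ℓ.1 + 1) else 0 := by
    intro ℓ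
    split_ifs with hℓ
    · rw [inv_pow, ← one_div]
      gcongr
      exact_mod_cast Nat.le_of_lt_succ (ZMod.val_lt (y ℓ))
    · simp [h ℓ (by omega)]
  have hfrac : binaryFrac y ≤ ∑ ℓ ∈ Ico c m, (2⁻¹ : ℝ) ^ (ℓ + 1) :=
    calc binaryFrac y
        ≤ ∑ ℓ : Fin m, if c ≤ ℓ.1 then (2⁻¹ : ℝ) ^ (ℓ.1 + 1) else 0 :=
          Finset.sum_le_sum fun ℓ _ => hterm ℓ
      _ = ∑ ℓ ∈ range m, if c ≤ ℓ then (2⁻¹ : ℝ) ^ (ℓ + 1) else 0 :=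
          Fin.sum_univ_eq_sum_range (fun ℓ => if c ≤ ℓ then (2⁻¹ : ℝ) ^ (ℓ + 1) else 0) m
      _ = ∑ ℓ ∈ Ico c m, (2⁻¹ : ℝ) ^ (ℓ + 1) := by
          rw [← Finset.sum_filter]
          congr 1
          ext ℓ
          simp only [Finset.mem_filter, Finset.mem_range, Finset.mem_Ico]
          omega
  rw [Int.floor_eq_zero_iff]
  refine ⟨by unfold binaryFrac; positivity, ?_⟩
  calc (2 : ℝ) ^ c * binaryFrac y
      ≤ 2 ^ c * ∑ ℓ ∈ Ico c m, (2⁻¹ : ℝ) ^ (ℓ + 1) := by gcongr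
    _ < 2 ^ c * 2⁻¹ ^ c := by gcongr; exact sum_Ico_inv_two_pow_succ_lt c m
    _ = 1 := by rw [← mul_pow, mul_inv_cancel₀ two_ne_zero, one_pow]

theorem floor_two_pow_succ_mul_binaryFrac {c : ℕ} (hc : c < m)
    (h : ∀ ℓ : Fin m, ℓ.1 < c → y ℓ = 0) :
    ⌊(2 : ℝ) ^ (c + 1) * binaryFrac y⌋ = (y ⟨c, hc⟩).val := by
  classical
  set c' : Fin m := ⟨c, hc⟩
  set y' := Function.update y c' 0
  have hsplit : binaryFrac y = (y c').val / 2 ^ (c + 1) + binaryFrac y' := by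
    unfold binaryFrac
    rw [Fintype.sum_eq_add_sum_compl c', Fintype.sum_eq_add_sum_compl c' (fun ℓ => _ / _)]
    simp only [y', Function.update_self, ZMod.val_zero, Nat.cast_zero, zero_div, zero_add]
    congr 1
    refine Finset.sum_congr rfl fun ℓ hℓ => ?_
    rw [Function.update_of_ne (by simpa using hℓ)]
  have hy' : ∀ ℓ : Fin m, ℓ.1 < c + 1 → y' ℓ = 0 := by
    intro ℓ hℓ
    rcases eq_or_ne ℓ c' with rfl | hne
    · exact Function.update_self ..
    · simp only [y', Function.update_of_ne hne]
      exact h ℓ (by have : ℓ.1 ≠ c := fun he => hne (Fin.ext he); omega)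
  rw [hsplit, mul_add, mul_div_cancel₀ _ (by positivity), Int.floor_natCast_add,
    floor_two_pow_mul_binaryFrac_eq_zero y' hy', add_zero]

theorem Nf_zero_binaryFrac {c : ℕ} (hc : c < m) (h : ∀ ℓ : Fin m, ℓ.1 < c → y ℓ = 0) :
    Nf 0 (binaryFrac y) c = (-1) ^ (y ⟨c, hc⟩).val := by
  unfold Nf
  rw [mul_zero, mul_zero, Int.floor_zero, floor_two_pow_succ_mul_binaryFrac y hc h,
    floor_two_pow_mul_binaryFrac_eq_zero y h]
  generalize y ⟨c, hc⟩ = a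
  fin_cases a <;> decide

end BinaryFrac

theorem rowAt_dotProduct {m r : ℕ} (A : Matrix (Fin m) (Fin m) (ZMod 2)) (b : Fin m → ZMod 2)
    (hr : r < m) : rowAt m A r ⬝ᵥ b = (A *ᵥ b) ⟨r, hr⟩ := by
  unfold rowAt
  simp only [dif_pos hr]
  rfl

/-- For `c ≥ m` both sides are `1`, since `rowAt` is `0` past the last row. -/
theorem Nf_zero_binaryFrac_mulVec {m : ℕ} (A : Matrix (Fin m) (Fin m) (ZMod 2))
    (b : Fin m → ZMod 2) {c : ℕ} (h : ∀ r < c, rowAt m A r ⬝ᵥ b = 0) :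
    Nf 0 (binaryFrac (A *ᵥ b)) c = (-1) ^ (rowAt m A c ⬝ᵥ b).val := by
  have hlow : ∀ ℓ : Fin m, ℓ.1 < c → (A *ᵥ b) ℓ = 0 := fun ℓ hℓ =>
    (rowAt_dotProduct A b ℓ.2).symm.trans (h ℓ hℓ)
  by_cases hc : c < m
  · rw [rowAt_dotProduct A b hc]
    exact Nf_zero_binaryFrac _ hc hlow
  · have hA : A *ᵥ b = 0 := funext fun ℓ => hlow ℓ (by omega)
    have hrow : rowAt m A c = 0 := funext fun ℓ => dif_neg hc
    simp [hA, hrow, binaryFrac, Nf]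

theorem pt_zero {m s : ℕ} (C : Fin s → Matrix (Fin m) (Fin m) (ZMod 2)) (j : Fin s) :
    pt C 0 j = 0 := by
  have : bvec m 0 = 0 := funext fun ℓ => by simp [bvec]
  simp [pt, this]

theorem range_stack_ite_succ {m s : ℕ} (C : Fin s → Matrix (Fin m) (Fin m) (ZMod 2))
    {u w : Finset (Fin s)} (hwu : w ⊆ u) (k : Fin s → ℕ) :
    Set.range (stack C u (fun j => if j ∈ w then k j + 1 else k j))
      = Set.range (stack C u k) ∪ (fun j => rowAt m (C j) (k j)) '' w := by
  ext x
  constructor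
  · rintro ⟨⟨⟨j, hj⟩, ⟨r, hr⟩⟩, rfl⟩
    by_cases hrk : r < k j
    · exact Or.inl ⟨⟨⟨j, hj⟩, ⟨r, hrk⟩⟩, rfl⟩
    · have hjw : j ∈ w := by
        by_contra hjw
        simp only [hjw, if_false] at hr
        omega
      simp only [hjw, if_true] at hr
      exact Or.inr ⟨j, hjw, by simp [stack, show r = k j by omega]⟩
  · rintro (⟨⟨⟨j, hj⟩, ⟨r, hr⟩⟩, rfl⟩ | ⟨j, hjw, rfl⟩)
    · exact ⟨⟨⟨j, hj⟩, ⟨r, by split <;> omega⟩⟩, rfl⟩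
    · exact ⟨⟨⟨j, hwu hjw⟩, ⟨k j, by simp [Finset.mem_coe.mp hjw]⟩⟩, rfl⟩

theorem rank_stack_ite_succ {m s : ℕ} (C : Fin s → Matrix (Fin m) (Fin m) (ZMod 2))
    {u w : Finset (Fin s)} (hwu : w ⊆ u) (k : Fin s → ℕ) :
    (stack C u (fun j => if j ∈ w then k j + 1 else k j)).rank
      = finrank (ZMod 2) ↥(span (ZMod 2) (Set.range (stack C u k))
          ⊔ span (ZMod 2) ((fun j => rowAt m (C j) (k j)) '' w)) := by
  rw [rank_eq_finrank_span_row, row, range_stack_ite_succ C hwu, span_union]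

theorem statement_general (m s : ℕ)
    (C : Fin s → Matrix (Fin m) (Fin m) (ZMod 2))
    (u : Finset (Fin s))
    (k : Fin s → ℕ)
    (w : Finset (Fin s)) (hwu : w ⊆ u)
    (hrank : (stack C u (fun j => if j ∈ w then k j + 1 else k j)).rank
      - (stack C u k).rank < w.card) :
    ∃ v : Finset (Fin s), v ⊆ w ∧ v.Nonempty ∧
      ∀ i < 2 ^ m, (stack C u k).mulVec (bvec m i) = 0 →
        ∏ j ∈ v, Nf (pt C 0 j) (pt C i j) (k j) = 1 := by
  classical
  set g : Fin s → Fin m → ZMod 2 := fun j => rowAt m (C j) (k j)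
  obtain ⟨v, hvw, hv, hgv⟩ :
      ∃ v ⊆ w, v.Nonempty ∧ ∑ j ∈ v, g j ∈ span (ZMod 2) (Set.range (stack C u k)) := by
    by_contra! h
    have hrank_k : (stack C u k).rank
        = finrank (ZMod 2) (span (ZMod 2) (Set.range (stack C u k))) :=
      rank_eq_finrank_span_row _
    have := finrank_sup_span_image_eq_add_card _ g w h
    rw [← rank_stack_ite_succ C hwu, ← hrank_k] at this
    omega
  refine ⟨v, hvw, hv, fun i _ hi => ?_⟩
  have hlow : ∀ j ∈ u, ∀ r < k j, rowAt m (C j) r ⬝ᵥ bvec m i = 0 :=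
    fun j hj r hr => congrFun hi ⟨⟨j, hj⟩, ⟨r, hr⟩⟩
  calc ∏ j ∈ v, Nf (pt C 0 j) (pt C i j) (k j)
      = ∏ j ∈ v, (-1 : ℤ) ^ (g j ⬝ᵥ bvec m i).val :=
        Finset.prod_congr rfl fun j hj => by
          rw [pt_zero]
          exact Nf_zero_binaryFrac_mulVec _ _ (hlow j (hwu (hvw hj)))
    _ = 1 := prod_neg_one_pow_val_eq_one v _ <| by
        rw [← sum_dotProduct]
        exact dotProduct_eq_zero_of_mem_span_row hi hgv

theorem statement (m s : ℕ) (hm : 1 ≤ m) (hs : 1 ≤ s)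
    (C : Fin s → Matrix (Fin m) (Fin m) (ZMod 2))
    (u : Finset (Fin s)) (hu : u.Nonempty)
    (k : Fin s → ℕ) (hk : ∀ j ∈ u, k j ≤ m - 1)
    (w : Finset (Fin s)) (hwu : w ⊆ u) (hw : w.Nonempty)
    (hrank : (stack C u (fun j => if j ∈ w then k j + 1 else k j)).rank
      - (stack C u k).rank < w.card) :
    ∃ v : Finset (Fin s), v ⊆ w ∧ v.Nonempty ∧
      ∀ i < 2 ^ m, (stack C u k).mulVec (bvec m i) = 0 →
        ∏ j ∈ v, Nf (pt C 0 j) (pt C i j) (k j) = 1 :=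
  statement_general m s C u k w hwu hrank

end
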